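/- Let r > 0 be a real number, let x : ℕ → ℝ be a sequence, and define the r-order accumulation generating sequence by ξ(k) = ∑_{i=1}^{k} [Γ(r+k-i)/(Γ(k-i+1)·Γ(r))] · x(i) for k ≥ 1. Then applying the r-order reduction operator to ξ recovers the original sequence: for every k ≥ 1, ∑_{i=0}^{k-1} (-1)^i · [Γ(r+1)/(Γ(i+1)·Γ(r-i+1))] · ξ(k-i) = x(k). -/

import Mathlib

/-!
Both operators are convolutions with generalized binomial coefficients: the accumulation
kernel is `Γ(r+m)/(Γ(m+1)Γ(r)) = multichoose r m = (-1)^m choose (-r) m`, the coefficients of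
`(1-z)^(-r)`, and the reduction kernel is `(-1)^i choose r i`, those of `(1-z)^r`. Their
convolution is `(-1)^n choose (r + -r) n = δ_{n,0}` by Chu–Vandermonde, so swapping the order
of summation collapses the double sum to `x k`.
-/

open Finset Polynomial

namespace Ring

theorem sum_antidiagonal_neg_one_pow_mul_choose_mul_multichoose {R : Type*} [CommRing R]
    [BinomialRing R] (r : R) (n : ℕ) :
    ∑ ij ∈ antidiagonal n, (-1) ^ ij.1 * choose r ij.1 * multichoose r ij.2 =
      if n = 0 then 1 else 0 := by
  have hmulti (j : ℕ) : multichoose r j = (-1) ^ j * choose (-r) j := by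
    rw [choose_neg', Units.smul_def, zsmul_eq_mul, Int.cast_negOnePow_natCast, ← mul_assoc,
      ← pow_add, ← two_mul, pow_mul, neg_one_sq, one_pow, one_mul]
  calc ∑ ij ∈ antidiagonal n, (-1) ^ ij.1 * choose r ij.1 * multichoose r ij.2
      = (-1) ^ n * ∑ ij ∈ antidiagonal n, choose r ij.1 * choose (-r) ij.2 := by
        rw [mul_sum]
        refine sum_congr rfl fun ij hij => ?_
        rw [hmulti, ← mem_antidiagonal.mp hij, pow_add]
        ring
    _ = if n = 0 then 1 else 0 := by
        rw [← add_choose_eq n (Commute.all r (-r)), add_neg_cancel, choose_zero_ite]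
        split_ifs with hn <;> simp [hn]

theorem multichoose_eq_ascPochhammer_eval_div {K : Type*} [Field K] [CharZero K] (r : K)
    (n : ℕ) : multichoose r n = (ascPochhammer K n).eval r / n.factorial := by
  rw [eq_div_iff (Nat.cast_ne_zero.mpr n.factorial_ne_zero), mul_comm, ← nsmul_eq_mul,
    factorial_nsmul_multichoose_eq_ascPochhammer, ascPochhammer_smeval_eq_eval]

end Ring

namespace Real

theorem Gamma_add_nat_eq_mul_ascPochhammer_eval {s : ℝ} (hs : ∀ m : ℕ, s ≠ -m) (n : ℕ) :
    Gamma (s + n) = Gamma s * (ascPochhammer ℝ n).eval s := by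
  induction n with
  | zero => simp
  | succ n ih =>
    have hsn : s + n ≠ 0 := fun h => hs n (eq_neg_of_add_eq_zero_left h)
    rw [Nat.cast_succ, ← add_assoc, Gamma_add_one hsn, ih, ascPochhammer_succ_eval]
    ring

theorem Gamma_add_nat_div_eq_multichoose {r : ℝ} (hr : ∀ m : ℕ, r ≠ -m) (n : ℕ) :
    Gamma (r + n) / (Gamma (n + 1) * Gamma r) = Ring.multichoose r n := by
  have hΓ : Gamma r ≠ 0 := Gamma_ne_zero hr
  rw [Gamma_add_nat_eq_mul_ascPochhammer_eval hr, Gamma_nat_eq_factorial,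
    Ring.multichoose_eq_ascPochhammer_eval_div]
  field_simp

theorem Gamma_add_one_div_eq_choose {r : ℝ} (hr : ∀ m : ℕ, r + 1 ≠ -m) (n : ℕ) :
    Gamma (r + 1) / (Gamma (n + 1) * Gamma (r - n + 1)) = Ring.choose r n := by
  rw [Ring.choose]
  -- At a pole of `Γ (r - n + 1)` the left side is `_ / 0 = 0`, and `r` is a natural below `n`.
  by_cases hΓ : Gamma (r - n + 1) = 0
  · obtain ⟨m, hm⟩ := (Gamma_eq_zero_iff _).mp hΓ
    have hmn : m < n := by
      by_contra! h
      exact hr (m - n) (by push_cast [h]; linarith)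
    rw [hΓ, mul_zero, div_zero, hm, Ring.multichoose_eq_ascPochhammer_eval_div,
      ascPochhammer_eval_neg_coe_nat_of_lt hmn, zero_div]
  · have hs : ∀ m : ℕ, r - n + 1 ≠ -m := fun m h => hΓ ((Gamma_eq_zero_iff _).mpr ⟨m, h⟩)
    rw [← Gamma_add_nat_div_eq_multichoose hs, sub_add_eq_add_sub, sub_add_cancel]

end Real

section Accumulation

variable {R : Type*} [Semiring R]

def accumulation (a x : ℕ → R) (k : ℕ) : R :=
  ∑ j ∈ Icc 1 k, a (k - j) * x j

theorem sum_range_mul_accumulation {a c : ℕ → R}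
    (hca : ∀ n, ∑ ij ∈ antidiagonal n, c ij.1 * a ij.2 = if n = 0 then 1 else 0)
    (x : ℕ → R) {k : ℕ} (hk : 1 ≤ k) :
    ∑ i ∈ range k, c i * accumulation a x (k - i) = x k := by
  have hswap : ∑ i ∈ range k, ∑ j ∈ Icc 1 (k - i), c i * (a (k - i - j) * x j)
      = ∑ j ∈ Icc 1 k, ∑ i ∈ range (k - j + 1), c i * (a (k - i - j) * x j) :=
    sum_comm' fun i j => by simp only [mem_range, mem_Icc]; omega
  have hinner : ∀ j ∈ Icc 1 k,
      ∑ i ∈ range (k - j + 1), c i * (a (k - i - j) * x j) = if j = k then x j else 0 := by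
    intro j hj
    have hjk := (mem_Icc.mp hj).2
    calc ∑ i ∈ range (k - j + 1), c i * (a (k - i - j) * x j)
        = (∑ ij ∈ antidiagonal (k - j), c ij.1 * a ij.2) * x j := by
          rw [Nat.sum_antidiagonal_eq_sum_range_succ (fun i l => c i * a l), sum_mul]
          refine sum_congr rfl fun i _ => ?_
          rw [mul_assoc, Nat.sub_right_comm]
      _ = if j = k then x j else 0 := by
          rw [hca]
          split_ifs <;> first | omega | simp
  simp only [accumulation, mul_sum]
  rw [hswap, sum_congr rfl hinner, sum_ite_eq', if_pos (mem_Icc.mpr ⟨hk, le_rfl⟩)]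

end Accumulation

/-- The r-order reduction operator is a left inverse of the r-order accumulation operator:
if `ξ k = ∑_{i=1}^{k} [Γ(r+k-i)/(Γ(k-i+1)·Γ(r))] · x i` for all `k ≥ 1`, then
`∑_{i=0}^{k-1} (-1)^i · [Γ(r+1)/(Γ(i+1)·Γ(r-i+1))] · ξ (k-i) = x k` for all `k ≥ 1`. -/
theorem fractional_reduction_left_inverse_of_accumulation
    (r : ℝ) (hr : 0 < r) (x ξ : ℕ → ℝ)
    (hξ : ∀ k : ℕ, 1 ≤ k →
      ξ k = ∑ i ∈ Finset.Icc 1 k,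
        (Real.Gamma (r + (k : ℝ) - (i : ℝ))
            / (Real.Gamma ((k : ℝ) - (i : ℝ) + 1) * Real.Gamma r)) * x i)
    (k : ℕ) (hk : 1 ≤ k) :
    ∑ i ∈ Finset.range k,
        (-1 : ℝ) ^ i
          * (Real.Gamma (r + 1) / (Real.Gamma ((i : ℝ) + 1) * Real.Gamma (r - (i : ℝ) + 1)))
          * ξ (k - i)
      = x k := by
  have hr_nat (m : ℕ) : r ≠ -m := by linarith [m.cast_nonneg (α := ℝ)]
  have hr_succ_nat (m : ℕ) : r + 1 ≠ -m := by linarith [m.cast_nonneg (α := ℝ)]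
  have hξ_acc : ∀ n, 1 ≤ n → ξ n = accumulation (Ring.multichoose r) x n := by
    intro n hn
    rw [hξ n hn, accumulation]
    refine sum_congr rfl fun j hj => ?_
    rw [← Real.Gamma_add_nat_div_eq_multichoose hr_nat, Nat.cast_sub (mem_Icc.mp hj).2,
      add_sub_assoc]
  calc _ = ∑ i ∈ range k,
          (-1) ^ i * Ring.choose r i * accumulation (Ring.multichoose r) x (k - i) :=
        sum_congr rfl fun i hi => by
          rw [Real.Gamma_add_one_div_eq_choose hr_succ_nat,
            hξ_acc _ (Nat.sub_pos_of_lt (mem_range.mp hi))]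
    _ = x k := sum_range_mul_accumulation
        (Ring.sum_antidiagonal_neg_one_pow_mul_choose_mul_multichoose r) x hk
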